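/- While/If unfolding lemma: for every i ≥ 0, Boolean expression B, command C, and deterministic state S, if S ⊨ ¬wp(C⁰,¬B) ∧ … ∧ ¬wp(C^{i−1},¬B) ∧ wp(Cⁱ,¬B) (where Cᵏ denotes the k-fold sequential composition of C, C⁰ = skip), then ⟦while B do C⟧(μ_S) = ⟦(if B then C else skip)ⁱ⟧(μ_S). -/

import Mathlib

open scoped ENNReal

/-! ## Deterministic and probabilistic states -/

abbrev DState (V : Type) := V → ℤ

abbrev PState (V : Type) := DState V → ℝ≥0∞

open Classical in
noncomputable def pointDist {V : Type} (S : DState V) : PState V :=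
  fun S' => if S' = S then 1 else 0

def IsSubDist {V : Type} (μ : PState V) : Prop := (∑' S : DState V, μ S) ≤ 1

/-! ## Arithmetic and Boolean expressions over program variables -/

inductive AExp (V : Type) where
  | const : ℤ → AExp V
  | pvar : V → AExp V
  | add : AExp V → AExp V → AExp V
  | sub : AExp V → AExp V → AExp V
  | mul : AExp V → AExp V → AExp V

def AExp.eval {V : Type} (S : DState V) : AExp V → ℤ
  | const n => n
  | pvar X => S X
  | add e1 e2 => e1.eval S + e2.eval S
  | sub e1 e2 => e1.eval S - e2.eval S
  | mul e1 e2 => e1.eval S * e2.eval S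

inductive BExp (V : Type) where
  | tt : BExp V
  | ff : BExp V
  | le : AExp V → AExp V → BExp V
  | lt : AExp V → AExp V → BExp V
  | eq : AExp V → AExp V → BExp V
  | not : BExp V → BExp V
  | and : BExp V → BExp V → BExp V

def BExp.holds {V : Type} (S : DState V) : BExp V → Prop
  | tt => True
  | ff => False
  | le e1 e2 => e1.eval S ≤ e2.eval S
  | lt e1 e2 => e1.eval S < e2.eval S
  | eq e1 e2 => e1.eval S = e2.eval S
  | not b => ¬ b.holds S
  | and b1 b2 => b1.holds S ∧ b2.holds S

open Classical in
/-- restriction `↓_B μ` of a probabilistic state to the states satisfying `B`. -/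
noncomputable def dRestrict {V : Type} (B : BExp V) (μ : PState V) : PState V :=
  fun S => if B.holds S then μ S else 0

/-! ## Commands -/

inductive Cmd (V : Type) where
  | skip : Cmd V
  | assign : V → AExp V → Cmd V
  /-- probabilistic assignment `X ←$ {a₁:k₁,…,aₙ:kₙ}`: a list of pairs of
  nonnegative-real weights and integer values, with the weights summing to 1. -/
  | passign : V → {l : List (NNReal × ℤ) // (l.map Prod.fst).sum = 1} → Cmd V
  | seq : Cmd V → Cmd V → Cmd V
  | ifte : BExp V → Cmd V → Cmd V → Cmd V
  | whileDo : BExp V → Cmd V → Cmd V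

open Classical in
/-- semantics of the assignment of a state-dependent integer to variable `X`. -/
noncomputable def detAssign {V : Type} (X : V) (f : DState V → ℤ) (μ : PState V) : PState V :=
  fun S' => ∑' S : DState V, μ S * pointDist (Function.update S X (f S)) S'

open Classical in
noncomputable def Cmd.sem {V : Type} : Cmd V → PState V → PState V
  | .skip, μ => μ
  | .assign X E, μ => detAssign X (fun S => E.eval S) μ
  | .passign X Rl, μ =>
      fun S' => (Rl.1.map (fun p => (p.1 : ℝ≥0∞) * detAssign X (fun _ => p.2) μ S')).sum
  | .seq C1 C2, μ => C2.sem (C1.sem μ)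
  | .ifte B C1 C2, μ =>
      fun S' => C1.sem (dRestrict B μ) S' + C2.sem (dRestrict (BExp.not B) μ) S'
  | .whileDo B C, μ =>
      fun S' => ∑' i : ℕ, dRestrict (BExp.not B) ((fun ν => C.sem (dRestrict B ν))^[i] μ) S'
termination_by C _ => sizeOf C

/-- `C.pow k` is the `k`-fold sequential composition of `C` (with `C⁰ = skip`). -/
def Cmd.pow {V : Type} (C : Cmd V) : ℕ → Cmd V
  | 0 => .skip
  | k + 1 => .seq C (C.pow k)

/-! ## Deterministic assertions -/

inductive AExpL (V L : Type) where
  | const : ℤ → AExpL V L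
  | pvar : V → AExpL V L
  | lvar : L → AExpL V L
  | add : AExpL V L → AExpL V L → AExpL V L
  | sub : AExpL V L → AExpL V L → AExpL V L
  | mul : AExpL V L → AExpL V L → AExpL V L

def AExpL.eval {V L : Type} (I : L → ℤ) (S : DState V) : AExpL V L → ℤ
  | const n => n
  | pvar X => S X
  | lvar x => I x
  | add e1 e2 => e1.eval I S + e2.eval I S
  | sub e1 e2 => e1.eval I S - e2.eval I S
  | mul e1 e2 => e1.eval I S * e2.eval I S

def AExp.toL {V L : Type} : AExp V → AExpL V L
  | .const n => .const n
  | .pvar X => .pvar X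
  | .add e1 e2 => .add e1.toL e2.toL
  | .sub e1 e2 => .sub e1.toL e2.toL
  | .mul e1 e2 => .mul e1.toL e2.toL

/-- Deterministic assertions: first-order formulas over program and logical
variables (including, for the weakest preconditions of loops, countable
conjunctions `conj`). -/
inductive Assertion (V L : Type) where
  | tt : Assertion V L
  | ff : Assertion V L
  | le : AExpL V L → AExpL V L → Assertion V L
  | lt : AExpL V L → AExpL V L → Assertion V L
  | eq : AExpL V L → AExpL V L → Assertion V L
  | not : Assertion V L → Assertion V L
  | and : Assertion V L → Assertion V L → Assertion V L
  | all : L → Assertion V L → Assertion V L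
  | conj : (ℕ → Assertion V L) → Assertion V L

def Assertion.or {V L : Type} (φ ψ : Assertion V L) : Assertion V L :=
  (φ.not.and ψ.not).not

open Classical in
/-- satisfaction `S ⊨^I φ` of a deterministic assertion on a deterministic state. -/
def Assertion.sat {V L : Type} : Assertion V L → (L → ℤ) → DState V → Prop
  | tt, _, _ => True
  | ff, _, _ => False
  | le e1 e2, I, S => e1.eval I S ≤ e2.eval I S
  | lt e1 e2, I, S => e1.eval I S < e2.eval I S
  | eq e1 e2, I, S => e1.eval I S = e2.eval I S
  | not φ, I, S => ¬ φ.sat I S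
  | and φ ψ, I, S => φ.sat I S ∧ ψ.sat I S
  | all x φ, I, S => ∀ n : ℤ, φ.sat (Function.update I x n) S
  | conj f, I, S => ∀ k : ℕ, (f k).sat I S

open Classical in
noncomputable def AExpL.substP {V L : Type} (X : V) (E : AExp V) : AExpL V L → AExpL V L
  | const n => const n
  | pvar Y => if Y = X then E.toL else pvar Y
  | lvar x => lvar x
  | add e1 e2 => add (e1.substP X E) (e2.substP X E)
  | sub e1 e2 => sub (e1.substP X E) (e2.substP X E)
  | mul e1 e2 => mul (e1.substP X E) (e2.substP X E)

/-- substitution `φ[X/E]` of the arithmetic expression `E` for the program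
variable `X`. -/
noncomputable def Assertion.substP {V L : Type} (X : V) (E : AExp V) :
    Assertion V L → Assertion V L
  | tt => tt
  | ff => ff
  | le e1 e2 => le (e1.substP X E) (e2.substP X E)
  | lt e1 e2 => lt (e1.substP X E) (e2.substP X E)
  | eq e1 e2 => eq (e1.substP X E) (e2.substP X E)
  | not φ => not (φ.substP X E)
  | and φ ψ => and (φ.substP X E) (ψ.substP X E)
  | all x φ => all x (φ.substP X E)
  | conj f => conj (fun k => (f k).substP X E)

/-- the precondition `φ[X/k₁] ∧ … ∧ φ[X/kₙ]` of a probabilistic assignment. -/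
noncomputable def pasPre {V L : Type} (φ : Assertion V L) (X : V)
    (l : List (NNReal × ℤ)) : Assertion V L :=
  l.foldr (fun p acc => Assertion.and (φ.substP X (AExp.const p.2)) acc) Assertion.tt

def BExp.toAssertion {V L : Type} : BExp V → Assertion V L
  | tt => .tt
  | ff => .ff
  | le e1 e2 => .le e1.toL e2.toL
  | lt e1 e2 => .lt e1.toL e2.toL
  | eq e1 e2 => .eq e1.toL e2.toL
  | not b => .not b.toAssertion
  | and b1 b2 => .and b1.toAssertion b2.toAssertion

/-- `μ ⊨^I φ`: every support of the probabilistic state `μ` satisfies `φ`. -/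
def PSat {V L : Type} (μ : PState V) (I : L → ℤ) (φ : Assertion V L) : Prop :=
  ∀ S : DState V, μ S ≠ 0 → φ.sat I S

/-- validity `⊨ {φ} C {ψ}` of a Hoare triple with deterministic assertions. -/
def ValidD {V L : Type} (φ : Assertion V L) (C : Cmd V) (ψ : Assertion V L) : Prop :=
  ∀ (I : L → ℤ) (S : DState V), φ.sat I S → PSat (C.sem (pointDist S)) I ψ

/-! ## The proof system PHL_d -/

inductive Derivable {V L : Type} : Assertion V L → Cmd V → Assertion V L → Prop where
  | skip (φ : Assertion V L) : Derivable φ .skip φ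
  | assign (φ : Assertion V L) (X : V) (E : AExp V) :
      Derivable (φ.substP X E) (.assign X E) φ
  | passign (φ : Assertion V L) (X : V)
      (Rl : {l : List (NNReal × ℤ) // (l.map Prod.fst).sum = 1}) :
      Derivable (pasPre φ X Rl.1) (.passign X Rl) φ
  | seq {φ φ1 φ2 : Assertion V L} {C1 C2 : Cmd V} :
      Derivable φ C1 φ1 → Derivable φ1 C2 φ2 → Derivable φ (.seq C1 C2) φ2
  | ifte {φ ψ : Assertion V L} {B : BExp V} {C1 C2 : Cmd V} :
      Derivable (φ.and B.toAssertion) C1 ψ →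
      Derivable (φ.and B.toAssertion.not) C2 ψ →
      Derivable φ (.ifte B C1 C2) ψ
  | cons {φ' φ ψ ψ' : Assertion V L} {C : Cmd V} :
      (∀ (I : L → ℤ) (S : DState V), φ'.sat I S → φ.sat I S) →
      Derivable φ C ψ →
      (∀ (I : L → ℤ) (S : DState V), ψ.sat I S → ψ'.sat I S) →
      Derivable φ' C ψ'
  | and {φ1 φ2 ψ1 ψ2 : Assertion V L} {C : Cmd V} :
      Derivable φ1 C ψ1 → Derivable φ2 C ψ2 →
      Derivable (φ1.and φ2) C (ψ1.and ψ2)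
  | or {φ1 φ2 ψ1 ψ2 : Assertion V L} {C : Cmd V} :
      Derivable φ1 C ψ1 → Derivable φ2 C ψ2 →
      Derivable (φ1.or φ2) C (ψ1.or ψ2)
  | whileDo {φ : Assertion V L} {B : BExp V} {C : Cmd V} :
      Derivable (φ.and B.toAssertion) C φ →
      Derivable φ (.whileDo B C) (φ.and B.toAssertion.not)

/-! ## Weakest preconditions for deterministic assertions -/

noncomputable def wp {V L : Type} : Cmd V → Assertion V L → Assertion V L
  | .skip, φ => φ
  | .assign X E, φ => φ.substP X E
  | .passign X Rl, φ => pasPre φ X Rl.1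
  | .seq C1 C2, φ => wp C1 (wp C2 φ)
  | .ifte B C1 C2, φ =>
      (B.toAssertion.and (wp C1 φ)).or (B.toAssertion.not.and (wp C2 φ))
  | .whileDo B C, φ => .conj (fun k =>
      Nat.rec (motive := fun _ => Assertion V L) Assertion.tt
        (fun _ ψk => (B.toAssertion.and (wp C ψk)).or (B.toAssertion.not.and φ)) k)
termination_by C _ => sizeOf C

/-! ## Real expressions and weakest preterms -/

/-- Real expressions (terms): real constants, real variables, probabilities of
deterministic assertions, arithmetic combinations, and (semantically
interpreted) countable sums. -/
inductive RExp (V L R : Type) where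
  | const : ℝ → RExp V L R
  | rvar : R → RExp V L R
  | prob : Assertion V L → RExp V L R
  | add : RExp V L R → RExp V L R → RExp V L R
  | sub : RExp V L R → RExp V L R → RExp V L R
  | mul : RExp V L R → RExp V L R → RExp V L R
  | infsum : (ℕ → RExp V L R) → RExp V L R

noncomputable def RExp.eval {V L R : Type} (IL : L → ℤ) (IR : R → ℝ) (μ : PState V) :
    RExp V L R → ℝ
  | const a => a
  | rvar x => IR x
  | prob φ => (∑' S : {S : DState V // φ.sat IL S}, μ S.1).toReal
  | add r1 r2 => r1.eval IL IR μ + r2.eval IL IR μ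
  | sub r1 r2 => r1.eval IL IR μ - r2.eval IL IR μ
  | mul r1 r2 => r1.eval IL IR μ * r2.eval IL IR μ
  | infsum f => ∑' k : ℕ, (f k).eval IL IR μ

/-- the conditional term `r/B`. -/
def RExp.cond {V L R : Type} (B : Assertion V L) : RExp V L R → RExp V L R
  | const a => const a
  | rvar x => rvar x
  | prob φ => prob (φ.and B)
  | add r1 r2 => add (r1.cond B) (r2.cond B)
  | sub r1 r2 => sub (r1.cond B) (r2.cond B)
  | mul r1 r2 => mul (r1.cond B) (r2.cond B)
  | infsum f => infsum (fun k => (f k).cond B)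

open Classical in
/-- restriction `↓_B μ` of a probabilistic state to the states satisfying the
deterministic assertion `B` (under the interpretation `I`). -/
noncomputable def aRestrict {V L : Type} (I : L → ℤ) (B : Assertion V L) (μ : PState V) :
    PState V :=
  fun S => if B.sat I S then μ S else 0

/-- homomorphic extension of an action on probability atoms to all real
expressions. -/
def homExt {V L R : Type} (h : Assertion V L → RExp V L R) : RExp V L R → RExp V L R
  | .const a => .const a
  | .rvar x => .rvar x
  | .prob φ => h φ
  | .add r1 r2 => .add (homExt h r1) (homExt h r2)
  | .sub r1 r2 => .sub (homExt h r1) (homExt h r2)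
  | .mul r1 r2 => .mul (homExt h r1) (homExt h r2)
  | .infsum f => .infsum (fun k => homExt h (f k))

/-- the finite conjunction `f 0 ∧ … ∧ f (n-1)`. -/
def finConj {V L : Type} : ℕ → (ℕ → Assertion V L) → Assertion V L
  | 0, _ => .tt
  | k + 1, f => (finConj k f).and (f k)

/-- the assertion `wp(i) = ¬wp(C⁰,¬B) ∧ … ∧ ¬wp(C^{i-1},¬B) ∧ wp(Cⁱ,¬B)`. -/
noncomputable def wpN {V L : Type} (B : BExp V) (C : Cmd V) (i : ℕ) : Assertion V L :=
  (finConj i (fun j => (wp (C.pow j) B.toAssertion.not).not)).and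
    (wp (C.pow i) B.toAssertion.not)

/-- the assertion `wp(∞) = ⋀_{i≥0} ¬wp(Cⁱ,¬B)`. -/
noncomputable def wpInf {V L : Type} (B : BExp V) (C : Cmd V) : Assertion V L :=
  .conj (fun i => (wp (C.pow i) B.toAssertion.not).not)

open Classical in
/-- the weakest preterm of a probability atom `P(φ)` for the probabilistic
assignment `X ←$ l`: the sum over nonempty subsets `T` of the indices of
`(Σ_{i∈T} aᵢ) · P(⋀_{i∈T} φ[X/kᵢ] ∧ ⋀_{j∉T} ¬φ[X/kⱼ])`. -/
noncomputable def ptPAS {V L R : Type} (X : V) (l : List (NNReal × ℤ))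
    (φ : Assertion V L) : RExp V L R :=
  (((Finset.univ : Finset (Finset (Fin l.length))).filter Finset.Nonempty).toList).foldr
    (fun T acc => RExp.add
      (RExp.mul (RExp.const (∑ i ∈ T, ((l.get i).1 : ℝ)))
        (RExp.prob (finConj l.length (fun j =>
          if h : j < l.length then
            (if (⟨j, h⟩ : Fin l.length) ∈ T then
              φ.substP X (AExp.const (l.get ⟨j, h⟩).2)
            else
              (φ.substP X (AExp.const (l.get ⟨j, h⟩).2)).not)
          else Assertion.tt))))
      acc)
    (RExp.const 0)

open Classical in
/-- the weakest preterm of a probability atom `P(φ)` with respect to a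
command. -/
noncomputable def ptProb {V L R : Type} : Cmd V → Assertion V L → RExp V L R
  | .skip, φ => .prob φ
  | .assign X E, φ => .prob (φ.substP X E)
  | .passign X Rl, φ => ptPAS X Rl.1 φ
  | .seq C1 C2, φ => homExt (fun ψ => ptProb C1 ψ) (ptProb C2 φ)
  | .ifte B C1 C2, φ =>
      .add ((ptProb C1 φ).cond B.toAssertion) ((ptProb C2 φ).cond B.toAssertion.not)
  | .whileDo B C, φ =>
      -- `g` is the preterm transformer of `IF = if B then C else skip`
      let g : RExp V L R → RExp V L R := fun r =>
        .add ((homExt (fun ψ => ptProb C ψ) r).cond B.toAssertion)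
          (r.cond B.toAssertion.not)
      -- `SUM = Σ_{i=0}^∞ P(wp(i)) · (pt(IFⁱ, P(φ)) / wp(i))`
      let SUM : RExp V L R := .infsum (fun i =>
        .mul (.prob (wpN B C i)) ((g^[i] (.prob φ)).cond (wpN B C i)))
      -- `f r = pt(C, r) / wp(∞)`
      let f : RExp V L R → RExp V L R := fun r =>
        (homExt (fun ψ => ptProb C ψ) r).cond (wpInf B C)
      -- `Σ_{i=0}^∞ Tᵢ` with `Tᵢ = fⁱ(SUM) · ∏_{j<i} fʲ(P(wp(∞)))`
      .infsum (fun i =>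
        .mul (f^[i] SUM)
          ((List.range i).foldr
            (fun j acc => .mul (f^[j] (.prob (wpInf B C))) acc) (.const 1)))
termination_by C _ => sizeOf C

/-- the weakest preterm `pt(C, r)`. -/
noncomputable def pt {V L R : Type} (C : Cmd V) : RExp V L R → RExp V L R :=
  homExt (fun φ => ptProb C φ)

/-! ## Probabilistic formulas -/

inductive PFormula (V L R : Type) where
  | le : RExp V L R → RExp V L R → PFormula V L R
  | lt : RExp V L R → RExp V L R → PFormula V L R
  | eq : RExp V L R → RExp V L R → PFormula V L R
  | not : PFormula V L R → PFormula V L R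
  | and : PFormula V L R → PFormula V L R → PFormula V L R

noncomputable def PFormula.sat {V L R : Type} (IL : L → ℤ) (IR : R → ℝ) (μ : PState V) :
    PFormula V L R → Prop
  | le r1 r2 => r1.eval IL IR μ ≤ r2.eval IL IR μ
  | lt r1 r2 => r1.eval IL IR μ < r2.eval IL IR μ
  | eq r1 r2 => r1.eval IL IR μ = r2.eval IL IR μ
  | not Φ => ¬ Φ.sat IL IR μ
  | and Φ Ψ => Φ.sat IL IR μ ∧ Ψ.sat IL IR μ

/-- the weakest precondition of a probabilistic assertion. -/
noncomputable def WP {V L R : Type} (C : Cmd V) : PFormula V L R → PFormula V L R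
  | .le r1 r2 => .le (pt C r1) (pt C r2)
  | .lt r1 r2 => .lt (pt C r1) (pt C r2)
  | .eq r1 r2 => .eq (pt C r1) (pt C r2)
  | .not Φ => .not (WP C Φ)
  | .and Φ Ψ => .and (WP C Φ) (WP C Ψ)

/-- validity `⊨ {Φ} C {Ψ}` of a Hoare triple with probabilistic assertions. -/
def ValidP {V L R : Type} (Φ : PFormula V L R) (C : Cmd V) (Ψ : PFormula V L R) : Prop :=
  ∀ (IL : L → ℤ) (IR : R → ℝ) (μ : PState V), IsSubDist μ →
    Φ.sat IL IR μ → Ψ.sat IL IR (C.sem μ)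

/-! ## The proof system of PHL with probabilistic assertions -/

inductive PDerivable {V L R : Type} : PFormula V L R → Cmd V → PFormula V L R → Prop where
  | skip (Φ : PFormula V L R) : PDerivable Φ .skip Φ
  | assign (Φ : PFormula V L R) (X : V) (E : AExp V) :
      PDerivable (WP (.assign X E) Φ) (.assign X E) Φ
  | passign (Φ : PFormula V L R) (X : V)
      (Rl : {l : List (NNReal × ℤ) // (l.map Prod.fst).sum = 1}) :
      PDerivable (WP (.passign X Rl) Φ) (.passign X Rl) Φ
  | ifte (Φ : PFormula V L R) (B : BExp V) (C1 C2 : Cmd V) :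
      PDerivable (WP (.ifte B C1 C2) Φ) (.ifte B C1 C2) Φ
  | whileDo (Φ : PFormula V L R) (B : BExp V) (C : Cmd V) :
      PDerivable (WP (.whileDo B C) Φ) (.whileDo B C) Φ
  | seq {Φ Φ1 Φ2 : PFormula V L R} {C1 C2 : Cmd V} :
      PDerivable Φ C1 Φ1 → PDerivable Φ1 C2 Φ2 → PDerivable Φ (.seq C1 C2) Φ2
  | cons {Φ' Φ Ψ Ψ' : PFormula V L R} {C : Cmd V} :
      (∀ (IL : L → ℤ) (IR : R → ℝ) (μ : PState V), IsSubDist μ →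
        Φ'.sat IL IR μ → Φ.sat IL IR μ) →
      PDerivable Φ C Ψ →
      (∀ (IL : L → ℤ) (IR : R → ℝ) (μ : PState V), IsSubDist μ →
        Ψ.sat IL IR μ → Ψ'.sat IL IR μ) →
      PDerivable Φ' C Ψ'

/-!
Write `F ν = ⟦C⟧(↓_B ν)`, so that `⟦while B do C⟧μ = Σₖ ↓_¬B (Fᵏ μ)`, while an induction gives
`⟦if B then C else skip⟧ᵏ μ = Fᵏ μ + Σ_{j<k} ↓_¬B (Fʲ μ)`, because the terms that have already
left the loop are supported on `¬B` and pass through the conditional unchanged.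
Soundness of `wp` (if every support of `μ` satisfies `wp(C, φ)`, every support of `⟦C⟧μ`
satisfies `φ`) survives the restrictions inside `F`, since they only shrink supports; hence the
hypothesis `S ⊨ wp(Cⁱ, ¬B)` makes `Fⁱ μ_S` supported on `¬B`. Then `↓_B (Fⁱ μ_S) = 0`, all later
iterates vanish, the loop sum stops at `i`, and its last term `↓_¬B (Fⁱ μ_S)` is `Fⁱ μ_S` itself.
-/

section Semantics

open Classical

variable {V L : Type}

theorem AExp.eval_toL (I : L → ℤ) (S : DState V) (E : AExp V) :
    (E.toL : AExpL V L).eval I S = E.eval S := by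
  induction E <;> simp [AExp.toL, AExp.eval, AExpL.eval, *]

theorem BExp.sat_toAssertion (I : L → ℤ) (S : DState V) (B : BExp V) :
    (B.toAssertion : Assertion V L).sat I S ↔ B.holds S := by
  induction B <;> simp [BExp.toAssertion, BExp.holds, Assertion.sat, AExp.eval_toL, *]

theorem AExpL.eval_substP (X : V) (E : AExp V) (I : L → ℤ) (S : DState V) (e : AExpL V L) :
    (e.substP X E).eval I S = e.eval I (Function.update S X (E.eval S)) := by
  induction e with
  | pvar Y =>
      by_cases hYX : Y = X
      · subst hYX; simp [AExpL.substP, AExpL.eval, AExp.eval_toL]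
      · simp [AExpL.substP, hYX, AExpL.eval]
  | _ => simp [AExpL.substP, AExpL.eval, *]

theorem Assertion.sat_substP (X : V) (E : AExp V) (φ : Assertion V L) (I : L → ℤ)
    (S : DState V) : (φ.substP X E).sat I S ↔ φ.sat I (Function.update S X (E.eval S)) := by
  induction φ generalizing I <;> simp [Assertion.substP, Assertion.sat, AExpL.eval_substP, *]

theorem sat_pasPre (φ : Assertion V L) (X : V) (l : List (NNReal × ℤ)) (I : L → ℤ)
    (S : DState V) :
    (pasPre φ X l).sat I S ↔ ∀ p ∈ l, φ.sat I (Function.update S X p.2) := by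
  induction l with
  | nil => simp [pasPre, Assertion.sat]
  | cons q l ih =>
      simp only [pasPre, List.foldr_cons, Assertion.sat] at ih ⊢
      simp [ih, Assertion.sat_substP, AExp.eval]

theorem BExp.sat_guard (B : BExp V) (φ ψ : Assertion V L) (I : L → ℤ) (S : DState V) :
    ((B.toAssertion.and φ).or (B.toAssertion.not.and ψ)).sat I S ↔
      (B.holds S → φ.sat I S) ∧ (¬ B.holds S → ψ.sat I S) := by
  simp only [Assertion.or, Assertion.sat, BExp.sat_toAssertion]
  tauto

end Semantics

section Support

variable {V L : Type} {I : L → ℤ} {φ ψ : Assertion V L} {μ ν : PState V}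

theorem PSat.pointDist_of_sat {S : DState V} (h : φ.sat I S) : PSat (pointDist S) I φ := by
  intro S' hS'
  rw [show S' = S by simpa [pointDist] using hS']
  exact h

theorem dRestrict_ne_zero {B : BExp V} {S : DState V} :
    dRestrict B μ S ≠ 0 ↔ B.holds S ∧ μ S ≠ 0 := by
  by_cases hB : B.holds S <;> simp [dRestrict, hB]

theorem PSat.restrict (B : BExp V) (h : PSat μ I φ) : PSat (dRestrict B μ) I φ :=
  fun S hS => h S (dRestrict_ne_zero.1 hS).2

theorem PSat.add (hμ : PSat μ I φ) (hν : PSat ν I φ) : PSat (μ + ν) I φ := by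
  intro S hS
  by_cases h0 : μ S = 0
  · exact hν S (by simpa [h0] using hS)
  · exact hμ S h0

theorem PSat.tsum {μ : ℕ → PState V} (h : ∀ k, PSat (μ k) I φ) :
    PSat (fun S => ∑' k, μ k S) I φ := by
  intro S hS
  obtain ⟨k, hk⟩ : ∃ k, μ k S ≠ 0 := by simpa [ENNReal.tsum_eq_zero] using hS
  exact h k S hk

open Classical in
theorem PSat.assign {X : V} {f : DState V → ℤ}
    (h : ∀ S, μ S ≠ 0 → φ.sat I (Function.update S X (f S))) :
    PSat (detAssign X f μ) I φ := by
  intro S' hS'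
  obtain ⟨S, hS, hS'S⟩ : ∃ S, μ S ≠ 0 ∧ pointDist (Function.update S X (f S)) S' ≠ 0 := by
    simpa [detAssign, ENNReal.tsum_eq_zero] using hS'
  rw [show S' = Function.update S X (f S) by simpa [pointDist] using hS'S]
  exact h S hS

theorem PSat.dRestrict_of_guard {B : BExp V}
    (h : PSat μ I ((B.toAssertion.and φ).or (B.toAssertion.not.and ψ))) :
    PSat (dRestrict B μ) I φ := fun S hS =>
  ((B.sat_guard φ ψ I S).1 (h S (dRestrict_ne_zero.1 hS).2)).1 (dRestrict_ne_zero.1 hS).1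

theorem PSat.dRestrict_not_of_guard {B : BExp V}
    (h : PSat μ I ((B.toAssertion.and φ).or (B.toAssertion.not.and ψ))) :
    PSat (dRestrict B.not μ) I ψ := fun S hS =>
  ((B.sat_guard φ ψ I S).1 (h S (dRestrict_ne_zero.1 hS).2)).2 (dRestrict_ne_zero.1 hS).1

end Support

section Soundness

variable {V L : Type} {I : L → ℤ} {φ : Assertion V L} {μ : PState V}

noncomputable def loopStep (B : BExp V) (C : Cmd V) (μ : PState V) : PState V :=
  C.sem (dRestrict B μ)

theorem Cmd.sem_whileDo (B : BExp V) (C : Cmd V) (μ : PState V) :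
    (Cmd.whileDo B C).sem μ = fun S => ∑' k, dRestrict B.not ((loopStep B C)^[k] μ) S := by
  rw [Cmd.sem]
  rfl

/-- The `k`-th approximant `ψ_k` of `wp (while B do C) φ`. -/
noncomputable def wpWhileApprox (B : BExp V) (C : Cmd V) (φ : Assertion V L) (k : ℕ) :
    Assertion V L :=
  Nat.rec (motive := fun _ => Assertion V L) Assertion.tt
    (fun _ ψ => (B.toAssertion.and (wp C ψ)).or (B.toAssertion.not.and φ)) k

theorem wp_whileDo (B : BExp V) (C : Cmd V) (φ : Assertion V L) :
    wp (.whileDo B C) φ = .conj (wpWhileApprox B C φ) := by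
  rw [wp]
  rfl

theorem PSat.whileDo_of_wp {B : BExp V} {C : Cmd V}
    (hC : ∀ {ψ : Assertion V L} {ν : PState V}, PSat ν I (wp C ψ) → PSat (C.sem ν) I ψ)
    (h : PSat μ I (wp (.whileDo B C) φ)) : PSat ((Cmd.whileDo B C).sem μ) I φ := by
  have hexit : ∀ k ν, PSat ν I (wpWhileApprox B C φ (k + 1)) →
      PSat (dRestrict B.not ((loopStep B C)^[k] ν)) I φ := by
    intro k
    induction k with
    | zero => exact fun ν hν => hν.dRestrict_not_of_guard
    | succ k ih =>
        intro ν hν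
        rw [Function.iterate_succ_apply]
        exact ih _ (hC hν.dRestrict_of_guard)
  rw [wp_whileDo] at h
  rw [Cmd.sem_whileDo]
  exact PSat.tsum fun k => hexit k μ fun S hS => h S hS (k + 1)

theorem PSat.sem_of_wp (C : Cmd V) : ∀ {φ : Assertion V L} {μ : PState V},
    PSat μ I (wp C φ) → PSat (C.sem μ) I φ := by
  induction C with
  | skip => intro φ μ h; rw [wp] at h; rwa [Cmd.sem]
  | assign X E =>
      intro φ μ h
      rw [Cmd.sem]
      rw [wp] at h
      exact PSat.assign fun S hS => (Assertion.sat_substP X E φ I S).1 (h S hS)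
  | passign X Rl =>
      intro φ μ h S' hS'
      rw [Cmd.sem] at hS'
      obtain ⟨p, hp, hpS'⟩ : ∃ p ∈ Rl.1, detAssign X (fun _ => p.2) μ S' ≠ 0 := by
        by_contra! hzero
        refine hS' (List.sum_eq_zero fun x hx => ?_)
        obtain ⟨p, hp, rfl⟩ := List.mem_map.1 hx
        rw [hzero p hp, mul_zero]
      rw [wp] at h
      exact PSat.assign (fun S hS => (sat_pasPre φ X Rl.1 I S).1 (h S hS) p hp) S' hpS'
  | seq C₁ C₂ ih₁ ih₂ =>
      intro φ μ h
      rw [wp] at h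
      rw [Cmd.sem]
      exact ih₂ (ih₁ h)
  | ifte B C₁ C₂ ih₁ ih₂ =>
      intro φ μ h
      rw [wp] at h
      rw [Cmd.sem]
      exact PSat.add (ih₁ h.dRestrict_of_guard) (ih₂ h.dRestrict_not_of_guard)
  | whileDo B C ih => exact PSat.whileDo_of_wp ih

end Soundness

section Unfolding

variable {V L : Type} {I : L → ℤ} {φ : Assertion V L} {μ : PState V} {B : BExp V} {C : Cmd V}

theorem Cmd.sem_pow (C : Cmd V) (k : ℕ) : (C.pow k).sem = C.sem^[k] := by
  induction k with
  | zero => funext μ; rw [Cmd.pow, Cmd.sem]; rfl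
  | succ k ih => funext μ; rw [Cmd.pow, Cmd.sem, ih, Function.iterate_succ_apply]

/-- The zero sub-distribution has empty support, so it satisfies `wp C ff`. -/
theorem Cmd.sem_zero (C : Cmd V) : C.sem 0 = 0 := by
  funext S
  by_contra hS
  exact PSat.sem_of_wp (I := fun _ : Unit => 0) (φ := .ff) C (fun _ h => absurd rfl h) S hS

theorem PSat.loopStep_iterate {k : ℕ} (h : PSat μ I (wp (C.pow k) φ)) :
    PSat ((loopStep B C)^[k] μ) I φ := by
  induction k generalizing μ with
  | zero => rw [Cmd.pow, wp] at h; exact h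
  | succ k ih =>
      rw [Cmd.pow, wp] at h
      rw [Function.iterate_succ_apply]
      exact ih (PSat.sem_of_wp C (h.restrict B))

theorem dRestrict_zero (B : BExp V) : dRestrict B (0 : PState V) = 0 :=
  funext fun _ => by simp [dRestrict]

theorem PSat.dRestrict_eq_zero (h : PSat μ I (B.toAssertion.not)) : dRestrict B μ = 0 := by
  funext S
  by_contra hS
  exact h S (dRestrict_ne_zero.1 hS).2 ((B.sat_toAssertion I S).2 (dRestrict_ne_zero.1 hS).1)

theorem dRestrict_not_eq_self_of_dRestrict_eq_zero (h : dRestrict B μ = 0) :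
    dRestrict B.not μ = μ := by
  funext S
  have := congrFun h S
  by_cases hB : B.holds S <;> simp_all [dRestrict, BExp.holds]

theorem loopStep_iterate_eq_zero {n k : ℕ} (h : dRestrict B ((loopStep B C)^[n] μ) = 0)
    (hk : n < k) : (loopStep B C)^[k] μ = 0 := by
  obtain ⟨d, rfl⟩ : ∃ d, k = d + (n + 1) := ⟨k - (n + 1), by omega⟩
  have hfix : loopStep B C 0 = 0 := by
    rw [loopStep, dRestrict_zero, Cmd.sem_zero]
  rw [Function.iterate_add_apply, Function.iterate_succ_apply', loopStep, h, Cmd.sem_zero,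
    Function.iterate_fixed hfix]

theorem Cmd.sem_whileDo_of_terminates {n : ℕ} (h : dRestrict B ((loopStep B C)^[n] μ) = 0) :
    (Cmd.whileDo B C).sem μ =
      ∑ k ∈ Finset.range (n + 1), dRestrict B.not ((loopStep B C)^[k] μ) := by
  rw [Cmd.sem_whileDo]
  funext S
  rw [Finset.sum_apply, tsum_eq_sum]
  intro k hk
  rw [loopStep_iterate_eq_zero h (by simpa using hk)]
  simp [dRestrict]

theorem Cmd.sem_ifte_skip (B : BExp V) (C : Cmd V) (μ : PState V) :
    (Cmd.ifte B C .skip).sem μ = loopStep B C μ + dRestrict B.not μ := by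
  simp only [Cmd.sem]
  rfl

theorem Cmd.sem_iterate_ifte_skip (k : ℕ) :
    (Cmd.ifte B C .skip).sem^[k] μ =
      (loopStep B C)^[k] μ + ∑ j ∈ Finset.range k, dRestrict B.not ((loopStep B C)^[j] μ) := by
  induction k with
  | zero => simp
  | succ k ih =>
      set exited := ∑ j ∈ Finset.range k, dRestrict B.not ((loopStep B C)^[j] μ)
      have hB : ∀ ν, dRestrict B (ν + exited) = dRestrict B ν := fun ν => funext fun S => by
        by_cases hS : B.holds S <;> simp [exited, dRestrict, BExp.holds, Finset.sum_apply, hS]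
      have hnotB : ∀ ν, dRestrict B.not (ν + exited) = dRestrict B.not ν + exited :=
        fun ν => funext fun S => by
          by_cases hS : B.holds S <;> simp [exited, dRestrict, BExp.holds, Finset.sum_apply, hS]
      rw [Function.iterate_succ_apply', ih, Cmd.sem_ifte_skip, loopStep, hB, hnotB,
        Finset.sum_range_succ, Function.iterate_succ_apply', loopStep, add_comm exited]

theorem Cmd.sem_whileDo_eq_sem_pow_ifte {n : ℕ}
    (h : dRestrict B ((loopStep B C)^[n] μ) = 0) :
    (Cmd.whileDo B C).sem μ = ((Cmd.ifte B C .skip).pow n).sem μ := by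
  rw [Cmd.sem_whileDo_of_terminates h, Cmd.sem_pow, Cmd.sem_iterate_ifte_skip,
    Finset.sum_range_succ, dRestrict_not_eq_self_of_dRestrict_eq_zero h, add_comm]

end Unfolding

/-- While/If unfolding lemma: if
`S ⊨ ¬wp(C⁰,¬B) ∧ … ∧ ¬wp(C^{i−1},¬B) ∧ wp(Cⁱ,¬B)` then
`⟦while B do C⟧(μ_S) = ⟦(if B then C else skip)ⁱ⟧(μ_S)`. -/
theorem while_if_unfold {V L : Type} (i : ℕ) (B : BExp V) (C : Cmd V) (S : DState V)
    (h : ∀ I : L → ℤ,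
      (∀ j < i, ¬ (wp (C.pow j) (BExp.toAssertion B).not).sat I S) ∧
      (wp (C.pow i) ((BExp.toAssertion B : Assertion V L).not)).sat I S) :
    (Cmd.whileDo B C).sem (pointDist S) = ((Cmd.ifte B C .skip).pow i).sem (pointDist S) := by
  have hstart : PSat (pointDist S) (fun _ => 0) (wp (C.pow i) B.toAssertion.not) :=
    PSat.pointDist_of_sat (h fun _ => 0).2
  exact Cmd.sem_whileDo_eq_sem_pow_ifte hstart.loopStep_iterate.dRestrict_eq_zero
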